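/- arXiv:0811.3709 — 2 statements merged into one kernel-verified Lean document; each statement's English description precedes it below -/
import Mathlib

section
/- Let n ≥ 1, let q₀, v ∈ ℝⁿ, and let λ > 0. Let q(t) = q₀ + t·v (a geodesic of Euclidean space) and let ξ(t) = q(t) − λ·v. If ξ̂ : ℝ → ℝⁿ is differentiable and satisfies the reduced-observer equation ξ̂'(t) = −(ξ̂(t) − q(t))/λ for all t ≥ 0, then for all t ≥ 0 one has ‖ξ̂(t) − ξ(t)‖ = exp(−t/λ)·‖ξ̂(0) − ξ(0)‖. -/
/-! The error `e = ξ̂ - ξ` obeys the linear equation `e' = -λ⁻¹ • e`, because `ξ` moves with the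
constant velocity `v` of the geodesic and `ξ̂ - q = e - λ • v`. Hence `exp (t/λ) • e t` has zero
derivative, so it is constant on `[0, ∞)`. -/

open Real

section

variable {E : Type*} [NormedAddCommGroup E] [NormedSpace ℝ E]

theorem eq_exp_mul_smul_of_hasDerivAt_smul {e : ℝ → E} {a : ℝ}
    (he : ∀ s, 0 ≤ s → HasDerivAt e (a • e s) s) {t : ℝ} (ht : 0 ≤ t) :
    e t = exp (a * t) • e 0 := by
  set f : ℝ → E := fun s => exp (-a * s) • e s
  have hf : ∀ s, 0 ≤ s → HasDerivAt f 0 s := fun s hs => by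
    have hexp : HasDerivAt (fun s => exp (-a * s)) (exp (-a * s) * -a) s := by
      simpa using ((hasDerivAt_id s).const_mul (-a)).exp
    refine (hexp.smul (he s hs)).congr_deriv ?_
    rw [smul_smul, ← add_smul, show exp (-a * s) * a + exp (-a * s) * -a = 0 by ring,
      zero_smul]
  have hconst : f t = f 0 :=
    constant_of_has_deriv_right_zero
      (fun s hs => (hf s hs.1).continuousAt.continuousWithinAt)
      (fun s hs => (hf s hs.1).hasDerivWithinAt) t (Set.right_mem_Icc.2 ht)
  calc e t = exp (a * t) • f t := by
        simp only [f, smul_smul, ← exp_add, neg_mul, add_neg_cancel, exp_zero, one_smul]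
    _ = exp (a * t) • e 0 := by rw [hconst]; simp [f]

theorem hasDerivAt_sub_of_hasDerivAt_observer {ξhat ξ : ℝ → E} {v : E} {lam t : ℝ}
    (hlam : lam ≠ 0) (hξhat : HasDerivAt ξhat (-lam⁻¹ • (ξhat t - (ξ t + lam • v))) t)
    (hξ : HasDerivAt ξ v t) :
    HasDerivAt (fun s => ξhat s - ξ s) (-lam⁻¹ • (ξhat t - ξ t)) t := by
  refine (hξhat.sub hξ).congr_deriv ?_
  rw [sub_add_eq_sub_sub, smul_sub (-lam⁻¹) _ (lam • v), smul_smul, neg_mul,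
    inv_mul_cancel₀ hlam, neg_one_smul, sub_neg_eq_add, add_sub_cancel_right]

end

theorem reduced_observer_euclidean_exact_exponential_general
    (n : ℕ) (q₀ v : EuclideanSpace ℝ (Fin n)) (lam : ℝ) (hlam : 0 < lam)
    (q ξ : ℝ → EuclideanSpace ℝ (Fin n))
    (hq : ∀ t, q t = q₀ + t • v)
    (hξ : ∀ t, ξ t = q t - lam • v)
    (ξhat : ℝ → EuclideanSpace ℝ (Fin n))
    (hdiff : Differentiable ℝ ξhat)
    (hobs : ∀ t, 0 ≤ t → deriv ξhat t = -(lam⁻¹) • (ξhat t - q t)) :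
    ∀ t, 0 ≤ t → ‖ξhat t - ξ t‖ = Real.exp (-t / lam) * ‖ξhat 0 - ξ 0‖ := by
  have hξ_eq : ξ = fun t => q₀ - lam • v + t • v := by
    ext1 t; rw [hξ, hq]; abel
  have hξ_deriv : ∀ t, HasDerivAt ξ v t := fun t => by
    rw [hξ_eq]; simpa using ((hasDerivAt_id t).smul_const v).const_add (q₀ - lam • v)
  have herr : ∀ t, 0 ≤ t →
      HasDerivAt (fun s => ξhat s - ξ s) (-lam⁻¹ • (ξhat t - ξ t)) t := fun t ht => by
    refine hasDerivAt_sub_of_hasDerivAt_observer hlam.ne' ?_ (hξ_deriv t)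
    rw [hξ t, sub_add_cancel, ← hobs t ht]
    exact (hdiff t).hasDerivAt
  intro t ht
  rw [eq_exp_mul_smul_of_hasDerivAt_smul herr ht, norm_smul, norm_of_nonneg (exp_pos _).le,
    neg_mul, inv_mul_eq_div, neg_div]

/-- In Euclidean space ℝⁿ, along the geodesic `q t = q₀ + t • v`, any
differentiable solution `ξ̂` of the reduced-observer equation
`ξ̂' t = -(ξ̂ t - q t) / λ` (for `t ≥ 0`) tracks the point `ξ t = q t - λ • v`
with exact exponential rate: `‖ξ̂ t - ξ t‖ = exp (-t/λ) * ‖ξ̂ 0 - ξ 0‖` for all `t ≥ 0`. -/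
theorem reduced_observer_euclidean_exact_exponential
    (n : ℕ) (hn : 1 ≤ n) (q₀ v : EuclideanSpace ℝ (Fin n)) (lam : ℝ) (hlam : 0 < lam)
    (q ξ : ℝ → EuclideanSpace ℝ (Fin n))
    (hq : ∀ t, q t = q₀ + t • v)
    (hξ : ∀ t, ξ t = q t - lam • v)
    (ξhat : ℝ → EuclideanSpace ℝ (Fin n))
    (hdiff : Differentiable ℝ ξhat)
    (hobs : ∀ t, 0 ≤ t → deriv ξhat t = -(lam⁻¹) • (ξhat t - q t)) :
    ∀ t, 0 ≤ t → ‖ξhat t - ξ t‖ = Real.exp (-t / lam) * ‖ξhat 0 - ξ 0‖ :=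
  reduced_observer_euclidean_exact_exponential_general n q₀ v lam hlam q ξ hq hξ ξhat hdiff hobs
end

section
/- Let A > 0 and let K : ℝ → ℝ be continuous with K(σ) ≤ A for all σ. Let z : ℝ → ℝ be twice continuously differentiable with z''(σ) = −K(σ)·z(σ), z(0) = 0, z'(0) = 1. Let y(σ) = sin(√A·σ)/√A, so y'(σ) = cos(√A·σ) and y(σ)/y'(σ) = tan(√A·σ)/√A. Then for all σ with 0 < σ < π/(2√A): z'(σ) > 0 and z(σ)/z'(σ) ≤ tan(√A·σ)/√A. -/
/-!
Compare `z` with `y t = sin (√A t) / √A`, which solves `y'' = -A y`. Since `K ≤ A`, the Wronskian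
`W = z' y - z y'` satisfies `W' = (A - K) z y ≥ 0` as long as `z, y ≥ 0`, and `W 0 = 0`; hence
`z y' ≤ z' y`. This forces `z' > 0` while `√A σ < π / 2`: at a first point where `z' ≤ 0`, `z` has
increased from `0`, so `z y' > 0 ≥ z' y`. Dividing `z y' ≤ z' y` by `z' y' > 0` gives
`z / z' ≤ y / y' = tan (√A σ) / √A`.
-/

open Real Set

lemma exists_first_nonpos {f : ℝ → ℝ} {a b : ℝ} (hab : a ≤ b) (hf : ContinuousOn f (Icc a b))
    (ha : 0 < f a) (hb : f b ≤ 0) : ∃ t ∈ Ioc a b, f t ≤ 0 ∧ ∀ u ∈ Ico a t, 0 < f u := by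
  set S := Icc a b ∩ f ⁻¹' Iic 0
  have hS : IsClosed S := hf.preimage_isClosed_of_isClosed isClosed_Icc isClosed_Iic
  have hbdd : BddBelow S := ⟨a, fun x hx => hx.1.1⟩
  have hmem : sInf S ∈ S := hS.csInf_mem ⟨b, ⟨hab, le_rfl⟩, hb⟩ hbdd
  obtain ⟨⟨hat, htb⟩, ht⟩ := hmem
  refine ⟨sInf S, ⟨hat.lt_of_ne ?_, htb⟩, ht, ?_⟩
  · intro h
    rw [← h] at ht
    exact (ha.trans_le ht).false
  · rintro u ⟨hau, hut⟩
    by_contra! hu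
    exact (csInf_le hbdd ⟨⟨hau, hut.le.trans htb⟩, hu⟩).not_gt hut

lemma strictMonoOn_Icc_of_deriv_pos {f : ℝ → ℝ} (hf : Differentiable ℝ f) {a b : ℝ}
    (h : ∀ t ∈ Ioo a b, 0 < deriv f t) : StrictMonoOn f (Icc a b) :=
  strictMonoOn_of_deriv_pos (convex_Icc a b) hf.continuous.continuousOn
    (by rwa [interior_Icc])

noncomputable def wronskian (z y : ℝ → ℝ) (t : ℝ) : ℝ := deriv z t * y t - z t * deriv y t

lemma hasDerivAt_wronskian {K L z y : ℝ → ℝ} (hz : ContDiff ℝ 2 z) (hy : ContDiff ℝ 2 y)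
    (hzeq : ∀ t, deriv (deriv z) t = -K t * z t) (hyeq : ∀ t, deriv (deriv y) t = -L t * y t)
    (t : ℝ) : HasDerivAt (wronskian z y) ((L t - K t) * z t * y t) t := by
  have h := ((hz.differentiable_deriv_two t).hasDerivAt.mul
    ((hy.differentiable two_ne_zero) t).hasDerivAt).sub
    (((hz.differentiable two_ne_zero) t).hasDerivAt.mul (hy.differentiable_deriv_two t).hasDerivAt)
  refine h.congr_deriv ?_
  rw [hzeq, hyeq]
  ring

lemma wronskian_nonneg {K L z y : ℝ → ℝ} (hz : ContDiff ℝ 2 z) (hy : ContDiff ℝ 2 y)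
    (hzeq : ∀ t, deriv (deriv z) t = -K t * z t) (hyeq : ∀ t, deriv (deriv y) t = -L t * y t)
    {a c : ℝ} (hac : a ≤ c) (hKL : ∀ t ∈ Ioo a c, K t ≤ L t)
    (hz_nonneg : ∀ t ∈ Icc a c, 0 ≤ z t) (hy_nonneg : ∀ t ∈ Icc a c, 0 ≤ y t)
    (hza : z a = 0) (hya : y a = 0) : 0 ≤ wronskian z y c := by
  have hW := hasDerivAt_wronskian hz hy hzeq hyeq
  have hmono : MonotoneOn (wronskian z y) (Icc a c) := by
    refine monotoneOn_of_hasDerivWithinAt_nonneg (convex_Icc a c)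
      (fun t _ => (hW t).continuousAt.continuousWithinAt) (fun t _ => (hW t).hasDerivWithinAt) ?_
    rw [interior_Icc]
    intro t ht
    exact mul_nonneg (mul_nonneg (sub_nonneg.2 (hKL t ht)) (hz_nonneg t (Ioo_subset_Icc_self ht)))
      (hy_nonneg t (Ioo_subset_Icc_self ht))
  have h := hmono (left_mem_Icc.2 hac) (right_mem_Icc.2 hac) hac
  rwa [wronskian, hza, hya, mul_zero, zero_mul, sub_zero] at h

lemma hasDerivAt_sin_mul_div {s : ℝ} (hs : s ≠ 0) (t : ℝ) :
    HasDerivAt (fun t => sin (s * t) / s) (cos (s * t)) t := by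
  refine ((((hasDerivAt_id' t).const_mul s).sin).div_const s).congr_deriv ?_
  field_simp

lemma deriv_sin_mul_div {s : ℝ} (hs : s ≠ 0) :
    deriv (fun t => sin (s * t) / s) = fun t => cos (s * t) :=
  funext fun t => (hasDerivAt_sin_mul_div hs t).deriv

lemma deriv_deriv_sin_mul_div {s : ℝ} (hs : s ≠ 0) (t : ℝ) :
    deriv (deriv fun t => sin (s * t) / s) t = -s ^ 2 * (sin (s * t) / s) := by
  rw [deriv_sin_mul_div hs, (((hasDerivAt_id' t).const_mul s).cos).deriv]
  field_simp

lemma jacobi_mul_cos_le_deriv_mul_sin {A : ℝ} (hA : 0 < A) {K z : ℝ → ℝ} (hKA : ∀ t, K t ≤ A)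
    (hz : ContDiff ℝ 2 z) (hzeq : ∀ t, deriv (deriv z) t = -K t * z t) (hz0 : z 0 = 0)
    {c : ℝ} (hc : 0 ≤ c) (hcπ : √A * c ≤ π) (hz' : ∀ t ∈ Ioo 0 c, 0 < deriv z t) :
    z c * cos (√A * c) ≤ deriv z c * (sin (√A * c) / √A) := by
  have hs : 0 < √A := sqrt_pos.2 hA
  have hz_nonneg (t : ℝ) (ht : t ∈ Icc 0 c) : 0 ≤ z t :=
    hz0 ▸ (strictMonoOn_Icc_of_deriv_pos (hz.differentiable two_ne_zero) hz').monotoneOn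
      (left_mem_Icc.2 hc) ht ht.1
  have hW := wronskian_nonneg (L := fun _ => √A ^ 2) hz (by fun_prop) hzeq
    (deriv_deriv_sin_mul_div hs.ne') hc (fun t _ => (sq_sqrt hA.le).symm ▸ hKA t) hz_nonneg
    (fun t ht => div_nonneg (sin_nonneg_of_nonneg_of_le_pi (by nlinarith [ht.1])
      (by nlinarith [ht.2])) hs.le) hz0 (by simp)
  rwa [wronskian, deriv_sin_mul_div hs.ne', sub_nonneg] at hW

lemma jacobi_deriv_pos {A : ℝ} (hA : 0 < A) {K z : ℝ → ℝ} (hKA : ∀ t, K t ≤ A)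
    (hz : ContDiff ℝ 2 z) (hzeq : ∀ t, deriv (deriv z) t = -K t * z t) (hz0 : z 0 = 0)
    (hz'0 : deriv z 0 = 1) {c : ℝ} (hc : 0 ≤ c) (hcπ : √A * c < π / 2) : 0 < deriv z c := by
  have hs : 0 < √A := sqrt_pos.2 hA
  by_contra! hneg
  obtain ⟨t, ⟨ht, htc⟩, hz't, hpos⟩ := exists_first_nonpos hc
    (hz.continuous_deriv one_le_two).continuousOn (hz'0 ▸ one_pos) hneg
  have hst : √A * t < π / 2 := by nlinarith
  have hzt : 0 < z t := hz0 ▸ strictMonoOn_Icc_of_deriv_pos (hz.differentiable two_ne_zero)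
    (fun u hu => hpos u ⟨hu.1.le, hu.2⟩) (left_mem_Icc.2 ht.le) (right_mem_Icc.2 ht.le) ht
  have hcmp := jacobi_mul_cos_le_deriv_mul_sin hA hKA hz hzeq hz0 ht.le (by linarith [pi_pos])
    (fun u hu => hpos u ⟨hu.1.le, hu.2⟩)
  have hcos : 0 < cos (√A * t) := cos_pos_of_mem_Ioo ⟨by nlinarith [pi_pos], hst⟩
  have hsin : 0 ≤ sin (√A * t) / √A :=
    div_nonneg (sin_nonneg_of_nonneg_of_le_pi (by positivity) (by linarith [pi_pos])) hs.le
  nlinarith [mul_pos hzt hcos, mul_nonpos_of_nonpos_of_nonneg hz't hsin]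

theorem sturm_comparison_riccati_quotient_general
    (A : ℝ) (hA : 0 < A)
    (K : ℝ → ℝ) (hKA : ∀ σ, K σ ≤ A)
    (z : ℝ → ℝ) (hz : ContDiff ℝ 2 z)
    (hzeq : ∀ σ, deriv (deriv z) σ = -K σ * z σ)
    (hz0 : z 0 = 0) (hz'0 : deriv z 0 = 1) :
    ∀ σ, 0 < σ → σ < Real.pi / (2 * Real.sqrt A) →
      0 < deriv z σ ∧
      z σ / deriv z σ ≤ Real.tan (Real.sqrt A * σ) / Real.sqrt A := by
  intro σ hσ hσπ
  have hs : 0 < √A := sqrt_pos.2 hA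
  have hsσ : √A * σ < π / 2 := by
    rw [lt_div_iff₀ (by positivity)] at hσπ
    linarith
  have hz'σ := jacobi_deriv_pos hA hKA hz hzeq hz0 hz'0 hσ.le hsσ
  refine ⟨hz'σ, ?_⟩
  have hcmp := jacobi_mul_cos_le_deriv_mul_sin hA hKA hz hzeq hz0 hσ.le (by linarith [pi_pos])
    (fun u hu => jacobi_deriv_pos hA hKA hz hzeq hz0 hz'0 hu.1.le (by nlinarith [hu.2]))
  have hcos : 0 < cos (√A * σ) := cos_pos_of_mem_Ioo ⟨by nlinarith [pi_pos], hsσ⟩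
  rw [tan_eq_sin_div_cos, div_div, div_le_div_iff₀ hz'σ (by positivity)]
  rw [mul_div_assoc', le_div_iff₀ hs] at hcmp
  linarith

/-- Sturm comparison step: let `K` be continuous with `K ≤ A` (`A > 0`)
and let `z` solve the scalar Jacobi equation `z'' = -K z`, `z 0 = 0`, `z' 0 = 1`.
Comparing with `y σ = sin (√A σ)/√A` (whose Riccati quotient is `tan (√A σ)/√A`),
for all `0 < σ < π/(2√A)` one has `z' σ > 0` and `z σ / z' σ ≤ tan (√A σ)/√A`. -/
theorem sturm_comparison_riccati_quotient
    (A : ℝ) (hA : 0 < A)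
    (K : ℝ → ℝ) (hKcont : Continuous K) (hKA : ∀ σ, K σ ≤ A)
    (z : ℝ → ℝ) (hz : ContDiff ℝ 2 z)
    (hzeq : ∀ σ, deriv (deriv z) σ = -K σ * z σ)
    (hz0 : z 0 = 0) (hz'0 : deriv z 0 = 1) :
    ∀ σ, 0 < σ → σ < Real.pi / (2 * Real.sqrt A) →
      0 < deriv z σ ∧
      z σ / deriv z σ ≤ Real.tan (Real.sqrt A * σ) / Real.sqrt A :=
  sturm_comparison_riccati_quotient_general A hA K hKA z hz hzeq hz0 hz'0
end
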